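/- The polynomial Q_{2n}^n(z_1,...,z_{2n}) = Pf((z_i−z_j)^{-3})∏_{i<j}(z_i−z_j)^3 satisfies the clustering property: setting z_1 = z_2 = Z gives Q_{2n}^n(Z,Z,z_3,...,z_{2n}) = ∏_{k=3}^{2n} (Z − z_k)^6 · Q_{2n−2}^{n−1}(z_3,...,z_{2n}). -/

import Mathlib

/-- The index `2i` among `Fin (2n)`. -/
def lo (n : ℕ) (i : Fin n) : Fin (2 * n) := ⟨2 * i.val, by have := i.isLt; omega⟩

/-- The index `2i+1` among `Fin (2n)`. -/
def hi (n : ℕ) (i : Fin n) : Fin (2 * n) := ⟨2 * i.val + 1, by have := i.isLt; omega⟩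

/-- The Pfaffian of a `2n × 2n` matrix,
`Pf(A) = (1/(2^n n!)) Σ_{σ ∈ S_{2n}} sign(σ) ∏_{i=1}^n A_{σ(2i-1), σ(2i)}`. -/
noncomputable def pfaffian (n : ℕ) (A : Matrix (Fin (2 * n)) (Fin (2 * n)) ℂ) : ℂ :=
  ((2 : ℂ) ^ n * (n.factorial : ℂ))⁻¹ *
    ∑ σ : Equiv.Perm (Fin (2 * n)),
      ((Equiv.Perm.sign σ : ℤ) : ℂ) * ∏ i : Fin n, A (σ (lo n i)) (σ (hi n i))

/-- Canonical representatives of perfect matchings of `{1, …, 2n}`: permutations `σ` with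
`σ(2i-1) < σ(2i)` for each pair and `σ(1) < σ(3) < ⋯ < σ(2n-1)`. -/
def matchingPerms (n : ℕ) : Finset (Equiv.Perm (Fin (2 * n))) :=
  Finset.univ.filter fun σ =>
    (∀ i : Fin n, σ (lo n i) < σ (hi n i)) ∧
    ∀ i j : Fin n, i < j → σ (lo n i) < σ (lo n j)

/-- `Q_{2n}^n`: the sum over perfect matchings of `{1,…,2n}` of the signed product of
`(z_j - z_k)^3` over all pairs `j, k` lying in distinct blocks of the matching
(equivalently `Pf((z_i - z_j)^{-3}) ∏_{i<j} (z_i - z_j)³`; note `Q₂¹ = 1`). -/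
noncomputable def Qn (n : ℕ) (z : Fin (2 * n) → ℂ) : ℂ :=
  ∑ σ ∈ matchingPerms n,
    ((Equiv.Perm.sign σ : ℤ) : ℂ) *
      ∏ p ∈ Finset.univ.filter (fun p : Fin (2 * n) × Fin (2 * n) =>
          p.1 < p.2 ∧ ∀ r : Fin n, ¬(σ (lo n r) = p.1 ∧ σ (hi n r) = p.2)),
        (z p.1 - z p.2) ^ 3

/-- The vector `(Z, Z, z₁, …, z_{2n})` obtained by setting the first two coordinates equal. -/
noncomputable def clust (n : ℕ) (Z : ℂ) (z : Fin (2 * n) → ℂ) : Fin (2 * (n + 1)) → ℂ :=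
  fun i => if h : i.val < 2 then Z else z ⟨i.val - 2, by have := i.isLt; omega⟩

/-!
Setting `z₁ = z₂ = Z` kills every matching in which `1` and `2` lie in different blocks, since
the cross pair `(1, 2)` contributes `(Z - Z)³`. The matchings containing the block `{1, 2}` are
the liftings of matchings of `{3, …, 2n}`, with the same sign. In such a term every `z_k` with
`k ≥ 3` forms a cross pair with both copies of `Z`, giving `∏ (Z - z_k)⁶`, and the remaining
cross pairs are those of the smaller matching.
-/

open Equiv Finset

theorem Equiv.Perm.exists_sumCongr_one_eq {α β : Type*} [Finite α] [Finite β]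
    {σ : Perm (α ⊕ β)} (h : ∀ a, σ (Sum.inl a) = Sum.inl a) :
    ∃ τ : Perm β, sumCongr 1 τ = σ := by
  obtain ⟨⟨σ₁, τ⟩, hσ⟩ := mem_sumCongrHom_range_of_perm_mapsTo_inl (σ := σ)
    (by rintro _ ⟨a, rfl⟩; exact ⟨a, (h a).symm⟩)
  have hσ₁ : σ₁ = 1 := by
    ext a
    simpa [← hσ] using h a
  exact ⟨τ, by rw [← hσ₁]; exact hσ⟩

def crossPairs (n : ℕ) (σ : Perm (Fin (2 * n))) : Finset (Fin (2 * n) × Fin (2 * n)) :=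
  univ.filter fun p => p.1 < p.2 ∧ ∀ r : Fin n, ¬(σ (lo n r) = p.1 ∧ σ (hi n r) = p.2)

theorem Qn_eq_sum_crossPairs (n : ℕ) (z : Fin (2 * n) → ℂ) :
    Qn n z = ∑ σ ∈ matchingPerms n,
      ((Perm.sign σ : ℤ) : ℂ) * ∏ p ∈ crossPairs n σ, (z p.1 - z p.2) ^ 3 :=
  rfl

def splitTwo (n : ℕ) : Fin 2 ⊕ Fin (2 * n) ≃ Fin (2 * (n + 1)) :=
  finSumFinEquiv.trans (finCongr (by omega))

namespace splitTwo

variable {n : ℕ}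

@[simp] theorem val_inl (i : Fin 2) : (splitTwo n (.inl i)).val = i.val := by
  simp [splitTwo]

@[simp] theorem val_inr (k : Fin (2 * n)) : (splitTwo n (.inr k)).val = k.val + 2 := by
  simp [splitTwo]

@[simp] theorem inl_lt_inl {i j : Fin 2} :
    splitTwo n (.inl i) < splitTwo n (.inl j) ↔ i < j := by
  simp only [Fin.lt_def, val_inl]

@[simp] theorem inl_lt_inr (i : Fin 2) (k : Fin (2 * n)) :
    splitTwo n (.inl i) < splitTwo n (.inr k) := by
  simp only [Fin.lt_def, val_inl, val_inr]; omega

@[simp] theorem not_inr_lt_inl (k : Fin (2 * n)) (i : Fin 2) :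
    ¬ splitTwo n (.inr k) < splitTwo n (.inl i) := by
  simp only [Fin.lt_def, val_inl, val_inr]; omega

@[simp] theorem inr_lt_inr {k l : Fin (2 * n)} :
    splitTwo n (.inr k) < splitTwo n (.inr l) ↔ k < l := by
  simp only [Fin.lt_def, val_inr]; omega

end splitTwo

section

variable {n : ℕ}

theorem lo_zero : lo (n + 1) 0 = splitTwo n (.inl 0) :=
  Fin.ext (by simp [lo])

theorem hi_zero : hi (n + 1) 0 = splitTwo n (.inl 1) :=
  Fin.ext (by simp [hi, Nat.one_mod_eq_one])

theorem lo_succ (r : Fin n) : lo (n + 1) r.succ = splitTwo n (.inr (lo n r)) :=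
  Fin.ext (by simp [lo]; ring)

theorem hi_succ (r : Fin n) : hi (n + 1) r.succ = splitTwo n (.inr (hi n r)) :=
  Fin.ext (by simp [hi]; ring)

def liftPerm (τ : Perm (Fin (2 * n))) : Perm (Fin (2 * (n + 1))) :=
  (splitTwo n).permCongr (Perm.sumCongr 1 τ)

@[simp] theorem liftPerm_inl (τ : Perm (Fin (2 * n))) (i : Fin 2) :
    liftPerm τ (splitTwo n (.inl i)) = splitTwo n (.inl i) := by
  simp [liftPerm, permCongr_apply]

@[simp] theorem liftPerm_inr (τ : Perm (Fin (2 * n))) (k : Fin (2 * n)) :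
    liftPerm τ (splitTwo n (.inr k)) = splitTwo n (.inr (τ k)) := by
  simp [liftPerm, permCongr_apply]

theorem sign_liftPerm (τ : Perm (Fin (2 * n))) : Perm.sign (liftPerm τ) = Perm.sign τ := by
  simp [liftPerm, Perm.sign_permCongr, Perm.sign_sumCongr]

theorem liftPerm_injective : Function.Injective (liftPerm (n := n)) := by
  intro τ τ' h
  refine Equiv.ext fun k => ?_
  simpa using congrArg (fun σ => σ (splitTwo n (.inr k))) h

theorem exists_liftPerm_eq {σ : Perm (Fin (2 * (n + 1)))}
    (h : ∀ i, σ (splitTwo n (.inl i)) = splitTwo n (.inl i)) : ∃ τ, liftPerm τ = σ := by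
  obtain ⟨τ, hτ⟩ := Perm.exists_sumCongr_one_eq (σ := (splitTwo n).symm.permCongr σ)
    (by simp [permCongr_apply, h])
  refine ⟨τ, ?_⟩
  rw [liftPerm, hτ, ← permCongr_symm, Equiv.apply_symm_apply]

theorem liftPerm_mem_matchingPerms_iff {τ : Perm (Fin (2 * n))} :
    liftPerm τ ∈ matchingPerms (n + 1) ↔ τ ∈ matchingPerms n := by
  simp [matchingPerms, Fin.forall_fin_succ, lo_zero, hi_zero, lo_succ, hi_succ]

theorem fixes_inl_of_notMem_crossPairs {σ : Perm (Fin (2 * (n + 1)))}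
    (hσ : σ ∈ matchingPerms (n + 1))
    (h : (splitTwo n (.inl 0), splitTwo n (.inl 1)) ∉ crossPairs (n + 1) σ) :
    ∀ i, σ (splitTwo n (.inl i)) = splitTwo n (.inl i) := by
  obtain ⟨r, h0, h1⟩ : ∃ r, σ (lo (n + 1) r) = splitTwo n (.inl 0) ∧
      σ (hi (n + 1) r) = splitTwo n (.inl 1) := by
    simpa [crossPairs] using h
  cases r using Fin.cases with
  | zero =>
    rw [lo_zero] at h0
    rw [hi_zero] at h1
    intro i
    fin_cases i <;> assumption
  | succ r =>
    have h_lt := (mem_filter.mp hσ).2.2 0 r.succ (Fin.succ_pos r)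
    rw [h0, Fin.lt_def, splitTwo.val_inl] at h_lt
    exact absurd h_lt (Nat.not_lt_zero _)

section

variable (τ : Perm (Fin (2 * n)))

@[simp] theorem inl_inl_notMem_crossPairs_liftPerm (i j : Fin 2) :
    (splitTwo n (.inl i), splitTwo n (.inl j)) ∉ crossPairs (n + 1) (liftPerm τ) := by
  fin_cases i <;> fin_cases j <;> simp [crossPairs, Fin.exists_fin_succ, lo_zero, hi_zero]

@[simp] theorem inl_inr_mem_crossPairs_liftPerm (i : Fin 2) (k : Fin (2 * n)) :
    (splitTwo n (.inl i), splitTwo n (.inr k)) ∈ crossPairs (n + 1) (liftPerm τ) := by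
  simp [crossPairs, Fin.forall_fin_succ, lo_zero, hi_zero, lo_succ, hi_succ]

@[simp] theorem inr_inl_notMem_crossPairs_liftPerm (k : Fin (2 * n)) (i : Fin 2) :
    (splitTwo n (.inr k), splitTwo n (.inl i)) ∉ crossPairs (n + 1) (liftPerm τ) := by
  simp [crossPairs]

@[simp] theorem inr_inr_mem_crossPairs_liftPerm_iff (k l : Fin (2 * n)) :
    (splitTwo n (.inr k), splitTwo n (.inr l)) ∈ crossPairs (n + 1) (liftPerm τ) ↔
      (k, l) ∈ crossPairs n τ := by
  simp [crossPairs, Fin.forall_fin_succ, lo_zero, hi_zero, lo_succ, hi_succ]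

theorem prod_crossPairs_liftPerm {M : Type*} [CommMonoid M]
    (f : Fin (2 * (n + 1)) × Fin (2 * (n + 1)) → M) :
    ∏ p ∈ crossPairs (n + 1) (liftPerm τ), f p =
      (∏ i : Fin 2, ∏ k, f (splitTwo n (.inl i), splitTwo n (.inr k))) *
        ∏ p ∈ crossPairs n τ, f (splitTwo n (.inr p.1), splitTwo n (.inr p.2)) := by
  rw [← Fintype.prod_ite_mem, Fintype.prod_prod_type, ← (splitTwo n).prod_comp]
  simp_rw [← (splitTwo n).prod_comp (fun y => if (_, y) ∈ _ then _ else _),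
    Fintype.prod_sum_type]
  simp only [inl_inl_notMem_crossPairs_liftPerm, inl_inr_mem_crossPairs_liftPerm,
    inr_inl_notMem_crossPairs_liftPerm, inr_inr_mem_crossPairs_liftPerm_iff, if_true, if_false,
    prod_const_one, one_mul]
  rw [← Fintype.prod_ite_mem (crossPairs n τ), Fintype.prod_prod_type]

end

variable (Z : ℂ) (z : Fin (2 * n) → ℂ)

@[simp] theorem clust_inl (i : Fin 2) : clust n Z z (splitTwo n (.inl i)) = Z := by
  simp only [clust, splitTwo.val_inl, i.isLt, dite_true]

@[simp] theorem clust_inr (k : Fin (2 * n)) : clust n Z z (splitTwo n (.inr k)) = z k := by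
  simp [clust]

theorem prod_crossPairs_liftPerm_clust (τ : Perm (Fin (2 * n))) :
    ∏ p ∈ crossPairs (n + 1) (liftPerm τ), (clust n Z z p.1 - clust n Z z p.2) ^ 3 =
      (∏ k, (Z - z k) ^ 6) * ∏ p ∈ crossPairs n τ, (z p.1 - z p.2) ^ 3 := by
  rw [prod_crossPairs_liftPerm]
  simp only [clust_inl, clust_inr, Fin.prod_univ_two, ← prod_mul_distrib, ← pow_add]

end

/-- Clustering property: `Q_{2n}^n(Z, Z, z₃, …, z_{2n}) = ∏_k (Z - z_k)^6 ⋅ Q_{2n-2}^{n-1}`. -/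
theorem Qn_clustering (n : ℕ) (Z : ℂ) (z : Fin (2 * n) → ℂ) :
    Qn (n + 1) (clust n Z z) = (∏ k, (Z - z k) ^ 6) * Qn n z := by
  rw [Qn_eq_sum_crossPairs, Qn_eq_sum_crossPairs, mul_sum]
  have hsub : (matchingPerms n).image liftPerm ⊆ matchingPerms (n + 1) := by
    simp [subset_iff, liftPerm_mem_matchingPerms_iff]
  rw [← sum_subset hsub ?vanish, sum_image fun _ _ _ _ h => liftPerm_injective h]
  · refine sum_congr rfl fun τ _ => ?_
    rw [sign_liftPerm, prod_crossPairs_liftPerm_clust]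
    ring
  case vanish =>
    intro σ hσ hσ_notMem
    have h01 : (splitTwo n (.inl 0), splitTwo n (.inl 1)) ∈ crossPairs (n + 1) σ := by
      by_contra h
      obtain ⟨τ, rfl⟩ := exists_liftPerm_eq (fixes_inl_of_notMem_crossPairs hσ h)
      exact hσ_notMem (mem_image_of_mem _ (liftPerm_mem_matchingPerms_iff.mp hσ))
    rw [prod_eq_zero h01 (by simp), mul_zero]
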